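/- Let G be a digraph on n vertices with d_u^+(G) = d_u^-(G) = d > 0 for every vertex u. Then for any edge e of G and any vertex v, the number of oriented spanning trees of the line digraph satisfies κ_e(L(G)) = d^{n(d-1)-1} · κ_v(G). -/

import Mathlib

/-! A digraph on a finite vertex type `V` is given by its edge set `E : Finset (V × V)`. -/

variable {V : Type*} [Fintype V] [DecidableEq V]

/-- The outdegree of a vertex `v`: the number of edges with tail `v`. -/
def outdeg (E : Finset (V × V)) (v : V) : ℕ := (E.filter fun e => e.1 = v).card

/-- The indegree of a vertex `v`: the number of edges with head `v`. -/
def indeg (E : Finset (V × V)) (v : V) : ℕ := (E.filter fun e => e.2 = v).card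

/-- The edge set of the line digraph: its vertices are the edges of `G`, with an edge
`e → f` exactly when the head of `e` is the tail of `f`. -/
def lineE (E : Finset (V × V)) : Finset ({e // e ∈ E} × {e // e ∈ E}) :=
  Finset.univ.filter fun p => (p.1 : V × V).2 = (p.2 : V × V).1

/-- Strong connectivity: every vertex can reach every other vertex along directed edges. -/
def StronglyConnected (E : Finset (V × V)) : Prop :=
  ∀ u v : V, Relation.ReflTransGen (fun a b => (a, b) ∈ E) u v

/-- The transition matrix of the simple random walk on the digraph `E`: from `i`, move to
each out-neighbour with probability `1 / d⁺(i)`. -/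
noncomputable def transMat (E : Finset (V × V)) : Matrix V V ℝ :=
  fun i j => if (i, j) ∈ E then (outdeg E i : ℝ)⁻¹ else 0

/-- The Kemeny constant of `P`, defined spectrally as `∑_{λ ≠ 1} 1/(1-λ)`, the sum running
over the roots (with multiplicity) of the characteristic polynomial of `P` over `ℂ`,
with one copy of the eigenvalue `1` removed. -/
noncomputable def kemeny {n : Type*} [Fintype n] [DecidableEq n] (P : Matrix n n ℝ) : ℂ :=
  (((P.map (Complex.ofReal)).charpoly.roots.erase 1).map fun z => (1 - z)⁻¹).sum

/-- `π` is a stationary distribution of `P`: positive, summing to `1`, with `πᵀ P = πᵀ`. -/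
def IsStationaryDist {n : Type*} [Fintype n] (P : Matrix n n ℝ) (π : n → ℝ) : Prop :=
  (∀ i, 0 < π i) ∧ (∑ i, π i = 1) ∧ ∀ j, ∑ i, π i * P i j = π j

/-- `f` is (the parent map of) an oriented spanning tree of `E` rooted at `u`: the root is
a fixed point, every other vertex `v` has its unique out-edge `(v, f v) ∈ E`, and iterating
`f` from any vertex reaches the root. -/
def IsSpanTree (E : Finset (V × V)) (u : V) (f : V → V) : Prop :=
  f u = u ∧ (∀ v, v ≠ u → (v, f v) ∈ E) ∧ ∀ v, ∃ k : ℕ, f^[k] v = u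

/-- The number of oriented spanning trees of `E` rooted at `u`. -/
noncomputable def kappa (E : Finset (V × V)) (u : V) : ℕ :=
  Nat.card {f : V → V // IsSpanTree E u f}

/-- `σ` is (the successor map of) an Eulerian circuit of `E`: a permutation of the edges
such that each edge is followed by an edge starting at its head, acting transitively on
the edges (a single closed walk through all edges). Eulerian circuits, counted up to
cyclic rotation, correspond bijectively to such permutations. -/
def IsEulerSucc (E : Finset (V × V)) (σ : Equiv.Perm {e // e ∈ E}) : Prop :=
  (∀ e : {e // e ∈ E}, (e : V × V).2 = ((σ e : {e // e ∈ E}) : V × V).1) ∧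
    ∀ e f : {e // e ∈ E}, ∃ k : ℕ, (σ ^ k) e = f

/-- The number of Eulerian circuits of `E`. -/
noncomputable def eulerCount (E : Finset (V × V)) : ℕ :=
  Nat.card {σ : Equiv.Perm {e // e ∈ E} // IsEulerSucc E σ}

/-- The `k`-blow-up of `E`: each vertex `i` becomes the class `{i} × Fin k`, with all edges
from the class of `i` to the class of `j` whenever `(i, j)` is an edge. -/
def blowup (E : Finset (V × V)) (k : ℕ) : Finset ((V × Fin k) × (V × Fin k)) :=
  Finset.univ.filter fun p => (p.1.1, p.2.1) ∈ E

/-- The spanning tree enumerator of `E` rooted at `u`, with edge weights induced by vertex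
indeterminates `w` (the edge `(v, z)` has weight `w z`): the sum over all oriented spanning
trees rooted at `u` of the product of the weights of their edges. -/
noncomputable def treeEnum {R : Type*} [CommRing R] (E : Finset (V × V)) (w : V → R)
    (u : V) : R :=
  ∑ᶠ (f : V → V) (_ : IsSpanTree E u f), ∏ v ∈ Finset.univ.erase u, w (f v)

/-! The adjacency matrices of `L(G)` and `G` are `B * C` and `C * B`, where `B` sends an edge
to its head and `C` a vertex to its out-edges. For `d`-regular `G` the Laplacians are therefore
`d - B * C` and `d - C * B`, whose characteristic polynomials differ by the factor
`(X - d)^(nd - n)`. By the matrix-tree theorem the coefficient of `X` in the characteristic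
polynomial of a Laplacian is, up to sign, `∑ᵤ κᵤ`, and for a balanced digraph all `κᵤ` coincide
(the Laplacian has zero row and column sums, so its adjugate is constant). Comparing coefficients
of `X` gives `nd · κ(L(G)) = d^(nd - n) · n · κ(G)`. -/

open Finset Matrix Polynomial

namespace Matrix

variable {n m : Type*} [Fintype n] [DecidableEq n] [Fintype m] [DecidableEq m]
  {R : Type*} [CommRing R]

def IsRegularOfDegree (A : Matrix n n R) (d : R) : Prop :=
  A *ᵥ 1 = (fun _ => d) ∧ 1 ᵥ* A = fun _ => d

theorem det_one_sub_of_isNilpotent [IsReduced R] {M : Matrix n n R} (hM : IsNilpotent M) :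
    (1 - M).det = 1 := by
  have hchar : M.charpoly = X ^ Fintype.card n := sub_eq_zero.mp <| Polynomial.ext fun k =>
    (Polynomial.isNilpotent_iff.mp (isNilpotent_charpoly_sub_pow_of_isNilpotent hM) k).eq_zero
  simpa [eval_charpoly] using congrArg (eval 1) hchar

theorem det_eq_zero_of_mulVec_one_eq_zero [IsDomain R] [Nonempty n] {M : Matrix n n R}
    (hM : M *ᵥ 1 = 0) : M.det = 0 :=
  exists_mulVec_eq_zero_iff.mp ⟨1, one_ne_zero, hM⟩

theorem adjugate_apply_eq_of_mulVec_one_eq_zero [IsDomain R] {M : Matrix n n R}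
    (hM : M *ᵥ 1 = 0) (i i' j : n) : M.adjugate i j = M.adjugate i' j := by
  have : Nonempty n := ⟨j⟩
  have hsplit : (Pi.single i 1 : n → R) = (Pi.single i 1 - Pi.single i' 1) + Pi.single i' 1 := by
    abel
  rw [adjugate_apply, adjugate_apply, hsplit, det_updateRow_add, add_eq_right]
  refine det_eq_zero_of_mulVec_one_eq_zero (funext fun k => ?_)
  by_cases hk : k = j
  · subst hk
    simp [mulVec, dotProduct, sum_sub_distrib]
  · simpa [updateRow_mulVec, hk] using congrFun hM k

theorem adjugate_apply_self_eq [IsDomain R] {M : Matrix n n R} (hrow : M *ᵥ 1 = 0)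
    (hcol : 1 ᵥ* M = 0) (i j : n) : M.adjugate i i = M.adjugate j j := by
  have hcolT : Mᵀ *ᵥ 1 = 0 := by rwa [mulVec_transpose]
  calc M.adjugate i i = M.adjugate j i := adjugate_apply_eq_of_mulVec_one_eq_zero hrow i j i
    _ = Mᵀ.adjugate i j := by rw [← adjugate_transpose, transpose_apply]
    _ = Mᵀ.adjugate j j := adjugate_apply_eq_of_mulVec_one_eq_zero hcolT i j j
    _ = M.adjugate j j := by rw [← adjugate_transpose, transpose_apply]

theorem charpoly_coeff_one_eq_sum_adjugate [Nonempty n] (M : Matrix n n R) :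
    M.charpoly.coeff 1 = (-1) ^ (Fintype.card n - 1) * ∑ i, M.adjugate i i := by
  have hn : 1 ≤ Fintype.card n := Fintype.card_pos
  have hminors := charpoly_coeff_eq_sum_minors M (Fintype.card n - 1) (Nat.sub_le _ _)
  rw [Nat.sub_sub_self hn] at hminors
  have hsets : powersetCard (Fintype.card n - 1) (univ : Finset n)
      = univ.image fun i => univ.erase i := by
    ext s
    simp only [mem_powersetCard, subset_univ, true_and, mem_image, mem_univ]
    constructor
    · intro hs
      obtain ⟨i, hi⟩ := card_eq_one.mp (by rw [card_compl, hs]; omega : #sᶜ = 1)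
      exact ⟨i, by rw [← compl_singleton, ← hi, compl_compl]⟩
    · rintro ⟨i, rfl⟩
      simp [card_erase_of_mem]
  rw [hminors, hsets, sum_image fun i _ j _ h => by simpa using congrArg (i ∈ ·) h]
  congr 1
  refine sum_congr rfl fun i _ => ?_
  rw [← det_piecewise_one_eq_submatrix_det, adjugate_apply]
  congr 1
  ext k l
  by_cases hk : k = i
  · subst hk
    simp [one_apply, Pi.single_apply, eq_comm]
  · simp [hk]

theorem charpoly_scalar_sub_mul_comm (A : Matrix m n R) (B : Matrix n m R)
    (hle : Fintype.card n ≤ Fintype.card m) (c : R) :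
    (scalar m c - A * B).charpoly
      = (X - C c) ^ (Fintype.card m - Fintype.card n) * (scalar n c - B * A).charpoly := by
  have hA : scalar m c - A * B = (-A) * B - scalar m (-c) := by simp [sub_eq_add_neg, add_comm]
  have hB : scalar n c - B * A = B * (-A) - scalar n (-c) := by simp [sub_eq_add_neg, add_comm]
  rw [hA, hB, charpoly_sub_scalar, charpoly_sub_scalar, charpoly_mul_comm_of_le _ _ hle,
    mul_comp, X_pow_comp, map_neg, ← sub_eq_add_neg]

end Matrix

def adjMat (F : Finset (V × V)) : Matrix V V ℤ := of fun i j => if (i, j) ∈ F then 1 else 0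

-- A loop `(i, i)` cancels on the diagonal, as it must: no spanning tree uses a loop.
def laplacian (F : Finset (V × V)) : Matrix V V ℤ := diagonal (adjMat F *ᵥ 1) - adjMat F

theorem laplacian_mulVec_one (F : Finset (V × V)) : laplacian F *ᵥ 1 = 0 := by
  ext i
  simp [laplacian, sub_mulVec, mulVec_diagonal]

theorem one_vecMul_laplacian (F : Finset (V × V)) :
    1 ᵥ* laplacian F = adjMat F *ᵥ 1 - 1 ᵥ* adjMat F := by
  ext j
  simp [laplacian, vecMul_sub, vecMul_diagonal]

section MatrixTree

variable (F : Finset (V × V)) (u : V)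

def outNbrs (w : V) : Finset V := univ.filter fun z => (w, z) ∈ F

def parentChoices (w : V) : Finset V := if w = u then {u} else outNbrs F w

-- A parent map `r` with `r w ∈ parentChoices F u w` picks one term of the row-wise multilinear
-- expansion of the reduced Laplacian. That term is `det (1 - parentMatrix u r)`: it is `1` when
-- `r` is a spanning tree rooted at `u` (the matrix is nilpotent) and `0` otherwise (the indicator
-- of the vertices that never reach `u` lies in its kernel).
def parentMatrix (r : V → V) : Matrix V V ℤ := of fun i j => if i ≠ u ∧ r i = j then 1 else 0

theorem mem_piFinset_parentChoices {r : V → V} :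
    r ∈ Fintype.piFinset (parentChoices F u) ↔ r u = u ∧ ∀ w, w ≠ u → (w, r w) ∈ F := by
  simp only [Fintype.mem_piFinset, parentChoices]
  constructor
  · intro h
    exact ⟨by simpa using h u, fun w hw => by simpa [hw, outNbrs] using h w⟩
  · rintro ⟨hu, hF⟩ w
    by_cases hw : w = u
    · simp [hw, hu]
    · simpa [hw, outNbrs] using hF w hw

theorem laplacian_updateRow_eq_sum :
    (laplacian F).updateRow u (Pi.single u 1)
      = of fun w => ∑ z ∈ parentChoices F u w, (1 - parentMatrix u fun _ => z) w := by
  ext w j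
  by_cases hw : w = u
  · subst hw
    simp [parentChoices, parentMatrix, one_apply, Pi.single_apply, eq_comm]
  · simp [hw, parentChoices, parentMatrix, outNbrs, laplacian, adjMat, mulVec, dotProduct,
      one_apply, diagonal_apply, sum_sub_distrib, sum_boole]

theorem det_laplacian_updateRow_eq_sum :
    ((laplacian F).updateRow u (Pi.single u 1)).det
      = ∑ r ∈ Fintype.piFinset (parentChoices F u), (1 - parentMatrix u r).det := by
  rw [laplacian_updateRow_eq_sum]
  refine (detRowAlternating.toMultilinearMap.map_sum_finset _ _).trans
    (sum_congr rfl fun r _ => ?_)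
  congr 1

variable {u}

theorem parentMatrix_mulVec (r : V → V) (x : V → ℤ) (i : V) :
    (parentMatrix u r *ᵥ x) i = if i = u then 0 else x (r i) := by
  by_cases hi : i = u <;> simp [parentMatrix, mulVec, dotProduct, hi, ite_and]

theorem parentMatrix_pow_mulVec (r : V → V) (x : V → ℤ) (k : ℕ) (i : V) :
    (parentMatrix u r ^ k *ᵥ x) i = if ∃ t < k, r^[t] i = u then 0 else x (r^[k] i) := by
  induction k generalizing x with
  | zero => simp
  | succ k ih =>
    rw [pow_succ, ← mulVec_mulVec, ih, parentMatrix_mulVec, Function.iterate_succ_apply']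
    simp only [Nat.exists_lt_succ_right]
    by_cases hk : ∃ t < k, r^[t] i = u
    · simp [hk]
    · by_cases hk' : r^[k] i = u <;> simp [hk, hk']

theorem isNilpotent_parentMatrix {r : V → V} (hr : ∀ w, ∃ k, r^[k] w = u) :
    IsNilpotent (parentMatrix u r) := by
  choose k hk using hr
  refine ⟨univ.sup k + 1, ext_iff_mulVec.mpr fun x => funext fun i => ?_⟩
  rw [parentMatrix_pow_mulVec, if_pos ⟨k i, Nat.lt_succ_of_le (le_sup (mem_univ i)), hk i⟩]
  simp

theorem det_one_sub_parentMatrix_eq_zero {r : V → V} (hr : ¬ ∀ w, ∃ k, r^[k] w = u) :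
    (1 - parentMatrix u r).det = 0 := by
  have hstep : ∀ i, i ≠ u → ((∃ k, r^[k] i = u) ↔ ∃ k, r^[k] (r i) = u) := by
    refine fun i hi => ⟨fun ⟨k, hk⟩ => ?_, fun ⟨k, hk⟩ => ⟨k + 1, hk⟩⟩
    cases k with
    | zero => exact absurd hk hi
    | succ k => exact ⟨k, hk⟩
  push Not at hr
  obtain ⟨w, hw⟩ := hr
  classical
  refine exists_mulVec_eq_zero_iff.mp ⟨fun i => if ∃ k, r^[k] i = u then 0 else 1, ?_, ?_⟩
  · exact fun h => by simpa [hw] using congrFun h w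
  · ext i
    rw [sub_mulVec, one_mulVec, Pi.sub_apply, parentMatrix_mulVec]
    by_cases hi : i = u
    · simp [hi, show ∃ k, r^[k] u = u from ⟨0, rfl⟩]
    · simp only [hi, if_false, hstep i hi, sub_self, Pi.zero_apply]

open scoped Classical in
theorem det_one_sub_parentMatrix (r : V → V) :
    (1 - parentMatrix u r).det = if ∀ w, ∃ k, r^[k] w = u then 1 else 0 := by
  split_ifs with hr
  · exact det_one_sub_of_isNilpotent (isNilpotent_parentMatrix hr)
  · exact det_one_sub_parentMatrix_eq_zero hr

variable (u)

theorem det_laplacian_updateRow :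
    ((laplacian F).updateRow u (Pi.single u 1)).det = kappa F u := by
  classical
  rw [det_laplacian_updateRow_eq_sum, sum_congr rfl fun r _ => det_one_sub_parentMatrix r,
    sum_boole, kappa, Nat.card_eq_fintype_card, Fintype.card_subtype]
  congr 2
  ext r
  rw [mem_filter, mem_filter, mem_piFinset_parentChoices]
  simp [IsSpanTree, and_assoc]

end MatrixTree

theorem adjugate_laplacian_apply_self (F : Finset (V × V)) (u : V) :
    (laplacian F).adjugate u u = kappa F u := by
  rw [adjugate_apply, det_laplacian_updateRow]

theorem charpoly_laplacian_coeff_zero [Nonempty V] (F : Finset (V × V)) :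
    (laplacian F).charpoly.coeff 0 = 0 := by
  have hdet := det_eq_sign_charpoly_coeff (laplacian F)
  rw [det_eq_zero_of_mulVec_one_eq_zero (laplacian_mulVec_one F)] at hdet
  simpa using hdet.symm

theorem charpoly_laplacian_coeff_one [Nonempty V] {F : Finset (V × V)}
    (hbal : 1 ᵥ* adjMat F = adjMat F *ᵥ 1) (u : V) :
    (laplacian F).charpoly.coeff 1
      = (-1) ^ (Fintype.card V - 1) * (Fintype.card V * kappa F u) := by
  have hcol : 1 ᵥ* laplacian F = 0 := by rw [one_vecMul_laplacian, hbal, sub_self]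
  rw [charpoly_coeff_one_eq_sum_adjugate, sum_congr rfl fun w _ =>
    adjugate_apply_self_eq (laplacian_mulVec_one F) hcol w u, adjugate_laplacian_apply_self]
  simp

theorem laplacian_eq_scalar_sub {F : Finset (V × V)} {d : ℤ}
    (hF : (adjMat F).IsRegularOfDegree d) : laplacian F = scalar V d - adjMat F := by
  rw [laplacian, hF.1]
  rfl

section LineDigraph

variable (E : Finset (V × V))

def headMatrix : Matrix {e // e ∈ E} V ℤ := of fun f w => if (f : V × V).2 = w then 1 else 0

def tailMatrix : Matrix V {e // e ∈ E} ℤ := of fun w g => if (g : V × V).1 = w then 1 else 0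

theorem adjMat_lineE : adjMat (lineE E) = headMatrix E * tailMatrix E := by
  ext f g
  simp [adjMat, lineE, headMatrix, tailMatrix, mul_apply, eq_comm]

omit [Fintype V] in
theorem adjMat_eq_tailMatrix_mul_headMatrix : adjMat E = tailMatrix E * headMatrix E := by
  ext u w
  simp only [adjMat, headMatrix, tailMatrix, of_apply, mul_apply, mul_ite, mul_one, mul_zero]
  rw [sum_coe_sort E fun e => if e.2 = w then if e.1 = u then 1 else 0 else 0]
  simp_rw [← ite_and, and_comm (a := _ = w), ← Prod.ext_iff (x := _) (y := (u, w))]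
  rw [sum_ite_eq']

theorem headMatrix_mulVec (x : V → ℤ) :
    headMatrix E *ᵥ x = fun f : {e // e ∈ E} => x (f : V × V).2 := by
  ext f
  simp [headMatrix, mulVec, dotProduct]

theorem vecMul_tailMatrix (x : V → ℤ) :
    x ᵥ* tailMatrix E = fun g : {e // e ∈ E} => x (g : V × V).1 := by
  ext g
  simp [tailMatrix, vecMul, dotProduct]

omit [Fintype V] in
theorem tailMatrix_mulVec_one : tailMatrix E *ᵥ 1 = fun w => (outdeg E w : ℤ) := by
  ext w
  simp only [tailMatrix, mulVec, dotProduct, of_apply, Pi.one_apply, mul_one]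
  rw [sum_coe_sort E fun e => if e.1 = w then (1 : ℤ) else 0, sum_boole, outdeg]

omit [Fintype V] in
theorem one_vecMul_headMatrix : 1 ᵥ* headMatrix E = fun w => (indeg E w : ℤ) := by
  ext w
  simp only [headMatrix, vecMul, dotProduct, of_apply, Pi.one_apply, one_mul]
  rw [sum_coe_sort E fun e => if e.2 = w then (1 : ℤ) else 0, sum_boole, indeg]

theorem card_eq_sum_outdeg : #E = ∑ w, outdeg E w :=
  card_eq_sum_card_fiberwise fun _ _ => mem_univ _

variable {E} {d : ℕ}

theorem isRegularOfDegree_adjMat (hreg : ∀ u, outdeg E u = d ∧ indeg E u = d) :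
    (adjMat E).IsRegularOfDegree d := by
  have hout : tailMatrix E *ᵥ 1 = fun _ => (d : ℤ) := by simp [tailMatrix_mulVec_one, hreg]
  have hin : 1 ᵥ* headMatrix E = fun _ => (d : ℤ) := by simp [one_vecMul_headMatrix, hreg]
  have hhead : headMatrix E *ᵥ 1 = 1 := by rw [headMatrix_mulVec]; rfl
  have htail : 1 ᵥ* tailMatrix E = 1 := by rw [vecMul_tailMatrix]; rfl
  rw [adjMat_eq_tailMatrix_mul_headMatrix, IsRegularOfDegree, ← mulVec_mulVec, ← vecMul_vecMul,
    hhead, htail]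
  exact ⟨hout, hin⟩

theorem isRegularOfDegree_adjMat_lineE (hreg : ∀ u, outdeg E u = d ∧ indeg E u = d) :
    (adjMat (lineE E)).IsRegularOfDegree d := by
  have hout : tailMatrix E *ᵥ 1 = fun _ => (d : ℤ) := by simp [tailMatrix_mulVec_one, hreg]
  have hin : 1 ᵥ* headMatrix E = fun _ => (d : ℤ) := by simp [one_vecMul_headMatrix, hreg]
  rw [adjMat_lineE, IsRegularOfDegree, ← mulVec_mulVec, ← vecMul_vecMul, hout, hin,
    headMatrix_mulVec, vecMul_tailMatrix]
  exact ⟨rfl, rfl⟩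

end LineDigraph

theorem eq_pow_mul_of_signed_count_eq {n d a b : ℕ} (hn : 0 < n) (hd : 0 < d)
    (h : ((-1) ^ (n * d - 1) * ((n * d : ℕ) * a) : ℤ)
      = (-(d : ℤ)) ^ (n * d - n) * ((-1) ^ (n - 1) * (n * b))) :
    a = d ^ (n * (d - 1) - 1) * b := by
  have hsign : (-(d : ℤ)) ^ (n * d - n) * ((-1) ^ (n - 1) * (n * b))
      = (-1) ^ (n * d - 1) * ((n * d ^ (n * (d - 1)) * b : ℕ) : ℤ) := by
    have hexp : n * d - 1 = (n * d - n) + (n - 1) := by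
      have := Nat.le_mul_of_pos_right n hd
      omega
    rw [neg_pow, hexp, pow_add, Nat.mul_sub_one]
    push_cast
    ring
  rw [hsign] at h
  have hcount : n * (d * a) = n * (d ^ (n * (d - 1)) * b) := by
    have := mul_left_cancel₀ (pow_ne_zero _ (by norm_num)) h
    rw [← mul_assoc, ← mul_assoc]
    exact_mod_cast this
  have hcount' := Nat.eq_of_mul_eq_mul_left hn hcount
  rcases Nat.lt_or_ge 1 d with hd1 | hd1
  · have hpos : 1 ≤ n * (d - 1) := Nat.one_le_iff_ne_zero.mpr (Nat.mul_ne_zero hn.ne' (by omega))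
    rw [← Nat.sub_add_cancel hpos, pow_succ', mul_assoc] at hcount'
    exact Nat.eq_of_mul_eq_mul_left hd hcount'
  · obtain rfl : d = 1 := by omega
    simpa using hcount'

/-- For a digraph `G` on `n` vertices with `d⁺(u) = d⁻(u) = d > 0` for every vertex `u`,
any edge `e` and any vertex `v`: `κ_e(L(G)) = d^(n(d-1)-1) · κ_v(G)`. -/
theorem stmt16 (E : Finset (V × V)) (d : ℕ) (hd : 0 < d)
    (hreg : ∀ u, outdeg E u = d ∧ indeg E u = d)
    (e : {e // e ∈ E}) (v : V) :
    kappa (lineE E) e = d ^ (Fintype.card V * (d - 1) - 1) * kappa E v := by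
  have : Nonempty V := ⟨(e : V × V).1⟩
  have : Nonempty {e // e ∈ E} := ⟨e⟩
  have hG := isRegularOfDegree_adjMat hreg
  have hL := isRegularOfDegree_adjMat_lineE hreg
  have hcard : Fintype.card {e // e ∈ E} = Fintype.card V * d := by
    simp [card_eq_sum_outdeg, hreg, mul_comm]
  have hchar : (laplacian (lineE E)).charpoly
      = (X - C (d : ℤ)) ^ (Fintype.card {e // e ∈ E} - Fintype.card V)
        * (laplacian E).charpoly := by
    rw [laplacian_eq_scalar_sub hL, laplacian_eq_scalar_sub hG, adjMat_lineE,
      adjMat_eq_tailMatrix_mul_headMatrix]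
    exact charpoly_scalar_sub_mul_comm _ _ (hcard ▸ Nat.le_mul_of_pos_right _ hd) _
  have hcoeff := congrArg (coeff · 1) hchar
  simp only [mul_coeff_one, charpoly_laplacian_coeff_zero, mul_zero, add_zero] at hcoeff
  simp only [charpoly_laplacian_coeff_one (hL.2.trans hL.1.symm) e,
    charpoly_laplacian_coeff_one (hG.2.trans hG.1.symm) v, coeff_zero_eq_eval_zero, eval_pow,
    eval_sub, eval_X, eval_C, zero_sub, hcard] at hcoeff
  exact eq_pow_mul_of_signed_count_eq Fintype.card_pos hd hcoeff
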